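/- Let dA be a positive integer, X the dA×dA anti-diagonal matrix, P_± = (I ± X)/2, and let S be a strongly unextendible subspace of dA×dA complex matrices. Define S' to be the span of the set {M, XMX, Mᴴ, XMᴴX, P₊MP₋, P₊XMXP₋, P₊MᴴP₋, P₊XMᴴXP₋, P₋MP₊, P₋XMXP₊, P₋MᴴP₊, P₋XMᴴXP₊} over all M ∈ S. Then: (1) dim S' ≤ 12·dim S; (2) S' is strongly unextendible; (3) S' is closed under conjugate transpose; (4) S'X = {MX : M ∈ S'} is closed under conjugate transpose; and (5) tr[Mᴴ (I+X) N (I−X)] = 0 for all M ∈ S' and N in the Frobenius orthocomplement of S'. -/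

import Mathlib

open Matrix

noncomputable section

/-- Frobenius (Hilbert-Schmidt) inner product `⟨M, N⟩ = tr(Mᴴ N)`. -/
def frobInner {α β : Type*} [Fintype α] [Fintype β] (M N : Matrix α β ℂ) : ℂ :=
  Matrix.trace (Mᴴ * N)

/-- Frobenius orthogonal complement of a set of matrices. -/
def frobOrthSet {α β : Type*} [Fintype α] [Fintype β] (S : Set (Matrix α β ℂ)) :
    Set (Matrix α β ℂ) :=
  {N | ∀ M ∈ S, frobInner M N = 0}

/-- `k`-fold Kronecker product of a family of matrices. -/
def kronPow {a b : ℕ} (k : ℕ) (M : Fin k → Matrix (Fin a) (Fin b) ℂ) :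
    Matrix (Fin k → Fin a) (Fin k → Fin b) ℂ :=
  Matrix.of fun i j => ∏ t, M t (i t) (j t)

/-- A set `S` of `a×b` matrices is `k`-unextendible if no nonzero matrix of rank at
most one (equivalently, no nonzero outer product `u vᵀ`) is Frobenius-orthogonal to
`S^{⊗k}`, i.e. to every `k`-fold Kronecker product of elements of `S`. -/
def KUnextendible {a b : ℕ} (S : Set (Matrix (Fin a) (Fin b) ℂ)) (k : ℕ) : Prop :=
  ∀ (u : (Fin k → Fin a) → ℂ) (v : (Fin k → Fin b) → ℂ), u ≠ 0 → v ≠ 0 →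
    ∃ M : Fin k → Matrix (Fin a) (Fin b) ℂ, (∀ t, M t ∈ S) ∧
      frobInner (kronPow k M) (Matrix.vecMulVec u v) ≠ 0

/-- A set of matrices is strongly unextendible if it is `k`-unextendible for all `k ≥ 1`. -/
def StronglyUnextendible {a b : ℕ} (S : Set (Matrix (Fin a) (Fin b) ℂ)) : Prop :=
  ∀ k : ℕ, 1 ≤ k → KUnextendible S k

/-- The `n×n` matrix with ones on the anti-diagonal and zeros elsewhere. -/
def Xmat (n : ℕ) : Matrix (Fin n) (Fin n) ℂ :=
  Matrix.of fun i j => if (i : ℕ) + (j : ℕ) = n - 1 then 1 else 0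

/-- `P₊ = (I + X)/2`. -/
def Pplus (n : ℕ) : Matrix (Fin n) (Fin n) ℂ := (2 : ℂ)⁻¹ • (1 + Xmat n)

/-- `P₋ = (I − X)/2`. -/
def Pminus (n : ℕ) : Matrix (Fin n) (Fin n) ℂ := (2 : ℂ)⁻¹ • (1 - Xmat n)

/-- The symmetrisation of a set `S` of `dA×dA` matrices: all matrices of the form
`M, XMX, Mᴴ, XMᴴX, P₊MP₋, P₊XMXP₋, P₊MᴴP₋, P₊XMᴴXP₋, P₋MP₊, P₋XMXP₊, P₋MᴴP₊,
P₋XMᴴXP₊` with `M ∈ S`. -/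
def symSet (dA : ℕ) (S : Set (Matrix (Fin dA) (Fin dA) ℂ)) :
    Set (Matrix (Fin dA) (Fin dA) ℂ) :=
  {N | ∃ M ∈ S,
    N = M ∨ N = Xmat dA * M * Xmat dA ∨ N = Mᴴ ∨ N = Xmat dA * Mᴴ * Xmat dA ∨
    N = Pplus dA * M * Pminus dA ∨ N = Pplus dA * (Xmat dA * M * Xmat dA) * Pminus dA ∨
    N = Pplus dA * Mᴴ * Pminus dA ∨ N = Pplus dA * (Xmat dA * Mᴴ * Xmat dA) * Pminus dA ∨
    N = Pminus dA * M * Pplus dA ∨ N = Pminus dA * (Xmat dA * M * Xmat dA) * Pplus dA ∨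
    N = Pminus dA * Mᴴ * Pplus dA ∨ N = Pminus dA * (Xmat dA * Mᴴ * Xmat dA) * Pplus dA}

/-!
Every generator of `S'` is `A`, `P₊AP₋` or `P₋AP₊` for some `A` in the orbit `{M, XMX, Mᴴ, XMᴴX}`
of an `M ∈ S` under the commuting involutions `M ↦ XMX` and `M ↦ Mᴴ`. As `X² = 1`,
`XP₊ = P₊X = P₊` and `XP₋ = P₋X = -P₋`, the maps `M ↦ Mᴴ`, `M ↦ XMX` and `M ↦ P₊MP₋` send
generators to generators up to sign or to `0`, so `S'` is stable under all three; this gives (3),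
(4), and (5) because `(I + X)M(I - X) = 4 P₊MP₋ ∈ S'` is orthogonal to `N`. The orbit spans at
most `4 dim S` dimensions and each of its two projections at most as many again, whence
`dim S' ≤ 12 dim S`; and unextendibility passes from `S` to its superset `S'`.
-/

theorem Submodule.finrank_map_le_of_semilinear {K K₂ V V₂ : Type*} [DivisionRing K]
    [DivisionRing K₂] [AddCommGroup V] [Module K V] [AddCommGroup V₂] [Module K₂ V₂]
    {σ : K →+* K₂} [RingHomSurjective σ] (f : V →ₛₗ[σ] V₂) (p : Submodule K V)
    [FiniteDimensional K p] : Module.finrank K₂ (p.map f) ≤ Module.finrank K p := by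
  let b := Module.finBasis K p
  calc Module.finrank K₂ (p.map f)
      = Module.finrank K₂ (Submodule.span K₂ (Set.range (f ∘ p.subtype ∘ b))) := by
        rw [Set.range_comp, Set.range_comp, ← Submodule.map_span, ← Submodule.map_span,
          b.span_eq, Submodule.map_top, Submodule.range_subtype]
    _ ≤ Module.finrank K p := (finrank_range_le_card _).trans_eq (Fintype.card_fin _)

theorem Submodule.finrank_sup_map_le {K V : Type*} [DivisionRing K] [AddCommGroup V]
    [Module K V] [FiniteDimensional K V] {σ : K →+* K} [RingHomSurjective σ]
    (p : Submodule K V) (f : V →ₛₗ[σ] V) :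
    Module.finrank K ↥(p ⊔ p.map f) ≤ 2 * Module.finrank K p := by
  have := p.finrank_map_le_of_semilinear f
  have := Submodule.finrank_add_le_finrank_add_finrank p (p.map f)
  omega

theorem KUnextendible.mono {a b k : ℕ} {S T : Set (Matrix (Fin a) (Fin b) ℂ)} (hST : S ⊆ T)
    (hS : KUnextendible S k) : KUnextendible T k := fun u v hu hv =>
  let ⟨M, hM, hne⟩ := hS u v hu hv
  ⟨M, fun t => hST (hM t), hne⟩

theorem StronglyUnextendible.mono {a b : ℕ} {S T : Set (Matrix (Fin a) (Fin b) ℂ)}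
    (hST : S ⊆ T) (hS : StronglyUnextendible S) : StronglyUnextendible T := fun k hk =>
  (hS k hk).mono hST

section Involution

variable (n : ℕ)

theorem Xmat_eq_permMatrix : Xmat n = Fin.revPerm.permMatrix ℂ := by
  ext i j
  have h : (i : ℕ) + j = n - 1 ↔ Fin.revPerm i = j := by
    rw [Fin.revPerm_apply, Fin.ext_iff, Fin.val_rev]; omega
  simp [Xmat, Equiv.Perm.permMatrix, PEquiv.toMatrix_apply, h]

theorem Xmat_mul_Xmat : Xmat n * Xmat n = 1 := by
  rw [Xmat_eq_permMatrix, ← permMatrix_mul,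
    show Fin.revPerm * Fin.revPerm = (1 : Equiv.Perm (Fin n)) from Equiv.ext Fin.rev_rev,
    permMatrix_one]

theorem Xmat_mul_Xmat_mul (A : Matrix (Fin n) (Fin n) ℂ) : Xmat n * (Xmat n * A) = A := by
  rw [← Matrix.mul_assoc, Xmat_mul_Xmat, Matrix.one_mul]

theorem Xmat_conjTranspose : (Xmat n)ᴴ = Xmat n := by
  rw [Xmat_eq_permMatrix, conjTranspose_permMatrix, Equiv.Perm.inv_def, Fin.revPerm_symm]

theorem Pplus_conjTranspose : (Pplus n)ᴴ = Pplus n := by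
  simp [Pplus, Xmat_conjTranspose]

theorem Pminus_conjTranspose : (Pminus n)ᴴ = Pminus n := by
  simp [Pminus, Xmat_conjTranspose]

theorem Xmat_mul_Pplus : Xmat n * Pplus n = Pplus n := by
  simp [Pplus, mul_add, Xmat_mul_Xmat, add_comm]

theorem Pplus_mul_Xmat : Pplus n * Xmat n = Pplus n := by
  simp [Pplus, add_mul, Xmat_mul_Xmat, add_comm]

theorem Xmat_mul_Pminus : Xmat n * Pminus n = -Pminus n := by
  simp [Pminus, mul_sub, Xmat_mul_Xmat, ← smul_neg]

theorem Pminus_mul_Xmat : Pminus n * Xmat n = -Pminus n := by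
  simp [Pminus, sub_mul, Xmat_mul_Xmat, ← smul_neg]

theorem Pplus_mul_Pplus : Pplus n * Pplus n = Pplus n := by
  nth_rewrite 1 [Pplus]
  rw [smul_mul, add_mul, Matrix.one_mul, Xmat_mul_Pplus, ← two_smul ℂ, smul_smul]
  norm_num

theorem Pminus_mul_Pminus : Pminus n * Pminus n = Pminus n := by
  nth_rewrite 1 [Pminus]
  rw [smul_mul, sub_mul, Matrix.one_mul, Xmat_mul_Pminus, sub_neg_eq_add, ← two_smul ℂ,
    smul_smul]
  norm_num

theorem Pplus_mul_Pminus : Pplus n * Pminus n = 0 := by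
  rw [Pplus, smul_mul, add_mul, Matrix.one_mul, Xmat_mul_Pminus, add_neg_cancel, smul_zero]

theorem one_add_Xmat : 1 + Xmat n = (2 : ℂ) • Pplus n := by
  rw [Pplus, smul_smul]; norm_num

theorem one_sub_Xmat : 1 - Xmat n = (2 : ℂ) • Pminus n := by
  rw [Pminus, smul_smul]; norm_num

end Involution

def xStarOrbit (n : ℕ) (S : Set (Matrix (Fin n) (Fin n) ℂ)) : Set (Matrix (Fin n) (Fin n) ℂ) :=
  {N | ∃ M ∈ S, N = M ∨ N = Xmat n * M * Xmat n ∨ N = Mᴴ ∨ N = Xmat n * Mᴴ * Xmat n}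

section Symmetrisation

open Submodule

variable {n : ℕ} {S : Set (Matrix (Fin n) (Fin n) ℂ)} {A M N : Matrix (Fin n) (Fin n) ℂ}

theorem mem_symSet : N ∈ symSet n S ↔
    ∃ A ∈ xStarOrbit n S, N = A ∨ N = Pplus n * A * Pminus n ∨ N = Pminus n * A * Pplus n := by
  simp only [symSet, xStarOrbit, Set.mem_ofPred_eq]
  constructor
  · rintro ⟨M, hM, h⟩
    have h₁ : M ∈ xStarOrbit n S := ⟨M, hM, Or.inl rfl⟩
    have h₂ : Xmat n * M * Xmat n ∈ xStarOrbit n S := ⟨M, hM, Or.inr (Or.inl rfl)⟩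
    have h₃ : Mᴴ ∈ xStarOrbit n S := ⟨M, hM, Or.inr (Or.inr (Or.inl rfl))⟩
    have h₄ : Xmat n * Mᴴ * Xmat n ∈ xStarOrbit n S := ⟨M, hM, Or.inr (Or.inr (Or.inr rfl))⟩
    rcases h with h | h | h | h | h | h | h | h | h | h | h | h
    exacts [⟨_, h₁, Or.inl h⟩, ⟨_, h₂, Or.inl h⟩, ⟨_, h₃, Or.inl h⟩, ⟨_, h₄, Or.inl h⟩,
      ⟨_, h₁, Or.inr (Or.inl h)⟩, ⟨_, h₂, Or.inr (Or.inl h)⟩, ⟨_, h₃, Or.inr (Or.inl h)⟩,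
      ⟨_, h₄, Or.inr (Or.inl h)⟩, ⟨_, h₁, Or.inr (Or.inr h)⟩, ⟨_, h₂, Or.inr (Or.inr h)⟩,
      ⟨_, h₃, Or.inr (Or.inr h)⟩, ⟨_, h₄, Or.inr (Or.inr h)⟩]
  · rintro ⟨A, ⟨M, hM, hA⟩, hN⟩
    refine ⟨M, hM, ?_⟩
    rcases hA with rfl | rfl | rfl | rfl <;> rcases hN with rfl | rfl | rfl <;>
      simp only [true_or, or_true]

theorem subset_symSet : S ⊆ symSet n S := fun M hM => ⟨M, hM, Or.inl rfl⟩

theorem conjTranspose_mem_xStarOrbit (hA : A ∈ xStarOrbit n S) : Aᴴ ∈ xStarOrbit n S := by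
  obtain ⟨M, hM, h⟩ := hA
  refine ⟨M, hM, ?_⟩
  rcases h with rfl | rfl | rfl | rfl <;>
    simp [conjTranspose_mul, Xmat_conjTranspose, Matrix.mul_assoc]

theorem Xmat_mul_mul_Xmat_mem_xStarOrbit (hA : A ∈ xStarOrbit n S) :
    Xmat n * A * Xmat n ∈ xStarOrbit n S := by
  obtain ⟨M, hM, h⟩ := hA
  refine ⟨M, hM, ?_⟩
  rcases h with rfl | rfl | rfl | rfl <;>
    simp [Xmat_mul_Xmat_mul, Xmat_mul_Xmat, Matrix.mul_assoc]

theorem conjTranspose_mem_symSet (hN : N ∈ symSet n S) : Nᴴ ∈ symSet n S := by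
  obtain ⟨A, hA, h⟩ := mem_symSet.1 hN
  refine mem_symSet.2 ⟨Aᴴ, conjTranspose_mem_xStarOrbit hA, ?_⟩
  rcases h with rfl | rfl | rfl <;>
    simp [conjTranspose_mul, Pplus_conjTranspose, Pminus_conjTranspose, Matrix.mul_assoc]

theorem Xmat_mul_mul_Xmat_mem_span_symSet_of_mem (hN : N ∈ symSet n S) :
    Xmat n * N * Xmat n ∈ span ℂ (symSet n S) := by
  obtain ⟨A, hA, rfl | rfl | rfl⟩ := mem_symSet.1 hN
  · exact subset_span (mem_symSet.2 ⟨_, Xmat_mul_mul_Xmat_mem_xStarOrbit hA, Or.inl rfl⟩)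
  · rw [show Xmat n * (Pplus n * A * Pminus n) * Xmat n = -(Pplus n * A * Pminus n) by
      simp only [← Matrix.mul_assoc, Xmat_mul_Pplus]
      simp only [Matrix.mul_assoc, Pminus_mul_Xmat, Matrix.mul_neg]]
    exact neg_mem (subset_span hN)
  · rw [show Xmat n * (Pminus n * A * Pplus n) * Xmat n = -(Pminus n * A * Pplus n) by
      simp only [← Matrix.mul_assoc, Xmat_mul_Pminus, Matrix.neg_mul]
      simp only [Matrix.mul_assoc, Pplus_mul_Xmat]]
    exact neg_mem (subset_span hN)

theorem Pplus_mul_mul_Pminus_mem_span_symSet_of_mem (hN : N ∈ symSet n S) :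
    Pplus n * N * Pminus n ∈ span ℂ (symSet n S) := by
  obtain ⟨A, hA, rfl | rfl | rfl⟩ := mem_symSet.1 hN
  · exact subset_span (mem_symSet.2 ⟨_, hA, Or.inr (Or.inl rfl)⟩)
  · rw [show Pplus n * (Pplus n * A * Pminus n) * Pminus n = Pplus n * A * Pminus n by
      simp only [← Matrix.mul_assoc, Pplus_mul_Pplus]
      simp only [Matrix.mul_assoc, Pminus_mul_Pminus]]
    exact subset_span hN
  · rw [show Pplus n * (Pminus n * A * Pplus n) * Pminus n = 0 by
      simp only [← Matrix.mul_assoc, Pplus_mul_Pminus, Matrix.zero_mul]]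
    exact zero_mem _

theorem conjTranspose_mem_span_symSet (hM : M ∈ span ℂ (symSet n S)) :
    Mᴴ ∈ span ℂ (symSet n S) :=
  (image_span_subset (conjTransposeLinearEquiv (Fin n) (Fin n) ℂ ℂ).toLinearMap _ _).2
    (fun _ hN => subset_span (conjTranspose_mem_symSet hN)) ⟨M, hM, rfl⟩

theorem Xmat_mul_mul_Xmat_mem_span_symSet (hM : M ∈ span ℂ (symSet n S)) :
    Xmat n * M * Xmat n ∈ span ℂ (symSet n S) :=
  (image_span_subset (LinearMap.mulLeftRight ℂ (Xmat n, Xmat n)) _ _).2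
    (fun _ => Xmat_mul_mul_Xmat_mem_span_symSet_of_mem) ⟨M, hM, rfl⟩

theorem Pplus_mul_mul_Pminus_mem_span_symSet (hM : M ∈ span ℂ (symSet n S)) :
    Pplus n * M * Pminus n ∈ span ℂ (symSet n S) :=
  (image_span_subset (LinearMap.mulLeftRight ℂ (Pplus n, Pminus n)) _ _).2
    (fun _ => Pplus_mul_mul_Pminus_mem_span_symSet_of_mem) ⟨M, hM, rfl⟩

end Symmetrisation

section Dimension

open Submodule Module

variable {n : ℕ}

theorem finrank_span_xStarOrbit_le (S : Submodule ℂ (Matrix (Fin n) (Fin n) ℂ)) :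
    finrank ℂ (span ℂ (xStarOrbit n S)) ≤ 4 * finrank ℂ S := by
  let conjT := (conjTransposeLinearEquiv (Fin n) (Fin n) ℂ ℂ).toLinearMap
  let T := S ⊔ S.map conjT
  have hle : span ℂ (xStarOrbit n S) ≤ T ⊔ T.map (LinearMap.mulLeftRight ℂ (Xmat n, Xmat n)) := by
    refine span_le.2 ?_
    rintro _ ⟨M, hM, rfl | rfl | rfl | rfl⟩
    · exact mem_sup_left (mem_sup_left hM)
    · exact mem_sup_right (mem_map_of_mem (mem_sup_left hM))
    · exact mem_sup_left (mem_sup_right (mem_map_of_mem hM))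
    · exact mem_sup_right (mem_map_of_mem (mem_sup_right (mem_map_of_mem hM)))
  have hT : finrank ℂ T ≤ 2 * finrank ℂ S := S.finrank_sup_map_le conjT
  calc finrank ℂ (span ℂ (xStarOrbit n S))
      ≤ finrank ℂ ↥(T ⊔ T.map (LinearMap.mulLeftRight ℂ (Xmat n, Xmat n))) := finrank_mono hle
    _ ≤ 2 * finrank ℂ T := T.finrank_sup_map_le _
    _ ≤ 4 * finrank ℂ S := by omega

theorem finrank_span_symSet_le (S : Submodule ℂ (Matrix (Fin n) (Fin n) ℂ)) :
    finrank ℂ (span ℂ (symSet n S)) ≤ 12 * finrank ℂ S := by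
  let W := span ℂ (xStarOrbit n S)
  let πpm := LinearMap.mulLeftRight ℂ (Pplus n, Pminus n)
  let πmp := LinearMap.mulLeftRight ℂ (Pminus n, Pplus n)
  have hle : span ℂ (symSet n S) ≤ W ⊔ W.map πpm ⊔ W.map πmp := by
    refine span_le.2 fun N hN => ?_
    obtain ⟨A, hA, rfl | rfl | rfl⟩ := mem_symSet.1 hN
    · exact mem_sup_left (mem_sup_left (subset_span hA))
    · exact mem_sup_left (mem_sup_right (mem_map_of_mem (subset_span hA)))
    · exact mem_sup_right (mem_map_of_mem (subset_span hA))
  have h₁ := finrank_add_le_finrank_add_finrank (W ⊔ W.map πpm) (W.map πmp)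
  have h₂ := finrank_add_le_finrank_add_finrank W (W.map πpm)
  have h₃ := W.finrank_map_le πpm
  have h₄ := W.finrank_map_le πmp
  have h₅ : finrank ℂ W ≤ 4 * finrank ℂ S := finrank_span_xStarOrbit_le S
  have h₆ := finrank_mono hle
  omega

end Dimension

theorem conjTranspose_mem_image_mul_Xmat {n : ℕ} {V : Set (Matrix (Fin n) (Fin n) ℂ)}
    (hstar : ∀ M ∈ V, Mᴴ ∈ V) (hX : ∀ M ∈ V, Xmat n * M * Xmat n ∈ V)
    {A : Matrix (Fin n) (Fin n) ℂ} (hA : A ∈ (fun M => M * Xmat n) '' V) :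
    Aᴴ ∈ (fun M => M * Xmat n) '' V := by
  obtain ⟨M, hM, rfl⟩ := hA
  refine ⟨Xmat n * Mᴴ * Xmat n, hX _ (hstar _ hM), ?_⟩
  simp [conjTranspose_mul, Xmat_conjTranspose, Matrix.mul_assoc, Xmat_mul_Xmat]

theorem trace_conjTranspose_mul_one_add_Xmat_mul_mul_one_sub_Xmat_eq_zero {n : ℕ}
    {V : Submodule ℂ (Matrix (Fin n) (Fin n) ℂ)} (hV : ∀ M ∈ V, Pplus n * M * Pminus n ∈ V)
    {M N : Matrix (Fin n) (Fin n) ℂ} (hM : M ∈ V) (hN : N ∈ frobOrthSet (V : Set _)) :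
    trace (Mᴴ * (1 + Xmat n) * N * (1 - Xmat n)) = 0 := by
  have hmem : (1 + Xmat n) * M * (1 - Xmat n) ∈ V := by
    rw [one_add_Xmat, one_sub_Xmat, smul_mul, smul_mul, Matrix.mul_smul]
    exact V.smul_mem _ (V.smul_mem _ (hV M hM))
  calc trace (Mᴴ * (1 + Xmat n) * N * (1 - Xmat n))
      = trace ((1 - Xmat n) * (Mᴴ * (1 + Xmat n) * N)) := trace_mul_comm _ _
    _ = frobInner ((1 + Xmat n) * M * (1 - Xmat n)) N := by
        simp [frobInner, conjTranspose_mul, Xmat_conjTranspose, Matrix.mul_assoc]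
    _ = 0 := hN _ hmem

theorem symmetrised_subspace_properties_general
    (dA : ℕ) (S : Submodule ℂ (Matrix (Fin dA) (Fin dA) ℂ))
    (hS : StronglyUnextendible (S : Set (Matrix (Fin dA) (Fin dA) ℂ))) :
    Module.finrank ℂ (Submodule.span ℂ (symSet dA (S : Set (Matrix (Fin dA) (Fin dA) ℂ)))) ≤
        12 * Module.finrank ℂ S ∧
    StronglyUnextendible
      ((Submodule.span ℂ (symSet dA (S : Set (Matrix (Fin dA) (Fin dA) ℂ)))) :
        Set (Matrix (Fin dA) (Fin dA) ℂ)) ∧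
    (∀ M ∈ Submodule.span ℂ (symSet dA (S : Set (Matrix (Fin dA) (Fin dA) ℂ))),
      Mᴴ ∈ Submodule.span ℂ (symSet dA (S : Set (Matrix (Fin dA) (Fin dA) ℂ)))) ∧
    (∀ A ∈ (fun M => M * Xmat dA) ''
        ((Submodule.span ℂ (symSet dA (S : Set (Matrix (Fin dA) (Fin dA) ℂ)))) :
          Set (Matrix (Fin dA) (Fin dA) ℂ)),
      Aᴴ ∈ (fun M => M * Xmat dA) ''
        ((Submodule.span ℂ (symSet dA (S : Set (Matrix (Fin dA) (Fin dA) ℂ)))) :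
          Set (Matrix (Fin dA) (Fin dA) ℂ))) ∧
    (∀ M ∈ Submodule.span ℂ (symSet dA (S : Set (Matrix (Fin dA) (Fin dA) ℂ))),
      ∀ N ∈ frobOrthSet
        ((Submodule.span ℂ (symSet dA (S : Set (Matrix (Fin dA) (Fin dA) ℂ)))) :
          Set (Matrix (Fin dA) (Fin dA) ℂ)),
        Matrix.trace (Mᴴ * (1 + Xmat dA) * N * (1 - Xmat dA)) = 0) :=
  ⟨finrank_span_symSet_le S,
    hS.mono (subset_symSet.trans Submodule.subset_span),
    fun _ => conjTranspose_mem_span_symSet,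
    fun _ => conjTranspose_mem_image_mul_Xmat (fun _ => conjTranspose_mem_span_symSet)
      (fun _ => Xmat_mul_mul_Xmat_mem_span_symSet),
    fun _ hM _ => trace_conjTranspose_mul_one_add_Xmat_mul_mul_one_sub_Xmat_eq_zero
      (fun _ => Pplus_mul_mul_Pminus_mem_span_symSet) hM⟩

/-- **Symmetrisation of a strongly unextendible subspace (from the proof of
Lemma 8 of the paper).**  If `S` is a strongly unextendible subspace of `dA×dA`
matrices, then the span `S'` of its symmetrisation satisfies: `dim S' ≤ 12·dim S`;
`S'` is strongly unextendible; `S'` and `S'X` are closed under conjugate transpose;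
and `tr[Mᴴ(I+X)N(I−X)] = 0` for all `M ∈ S'` and `N ∈ S'^⊥`. -/
theorem symmetrised_subspace_properties
    (dA : ℕ) (hdA : 0 < dA) (S : Submodule ℂ (Matrix (Fin dA) (Fin dA) ℂ))
    (hS : StronglyUnextendible (S : Set (Matrix (Fin dA) (Fin dA) ℂ))) :
    Module.finrank ℂ (Submodule.span ℂ (symSet dA (S : Set (Matrix (Fin dA) (Fin dA) ℂ)))) ≤
        12 * Module.finrank ℂ S ∧
    StronglyUnextendible
      ((Submodule.span ℂ (symSet dA (S : Set (Matrix (Fin dA) (Fin dA) ℂ)))) :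
        Set (Matrix (Fin dA) (Fin dA) ℂ)) ∧
    (∀ M ∈ Submodule.span ℂ (symSet dA (S : Set (Matrix (Fin dA) (Fin dA) ℂ))),
      Mᴴ ∈ Submodule.span ℂ (symSet dA (S : Set (Matrix (Fin dA) (Fin dA) ℂ)))) ∧
    (∀ A ∈ (fun M => M * Xmat dA) ''
        ((Submodule.span ℂ (symSet dA (S : Set (Matrix (Fin dA) (Fin dA) ℂ)))) :
          Set (Matrix (Fin dA) (Fin dA) ℂ)),
      Aᴴ ∈ (fun M => M * Xmat dA) ''
        ((Submodule.span ℂ (symSet dA (S : Set (Matrix (Fin dA) (Fin dA) ℂ)))) :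
          Set (Matrix (Fin dA) (Fin dA) ℂ))) ∧
    (∀ M ∈ Submodule.span ℂ (symSet dA (S : Set (Matrix (Fin dA) (Fin dA) ℂ))),
      ∀ N ∈ frobOrthSet
        ((Submodule.span ℂ (symSet dA (S : Set (Matrix (Fin dA) (Fin dA) ℂ)))) :
          Set (Matrix (Fin dA) (Fin dA) ℂ)),
        Matrix.trace (Mᴴ * (1 + Xmat dA) * N * (1 - Xmat dA)) = 0) :=
  symmetrised_subspace_properties_general dA S hS
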